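/- Let r ≥ 1, let G be a spanning subgraph of the Turán graph T(2r,r) on 2r vertices, and let D_1,…,D_s be some s ≥ 0 of the r vertex classes of size 2 corresponding to the colour classes in the unique (up to relabelling) r-colouring of T(2r,r). Then χ_gb(G; D_1,…,D_s) ≤ 2r − s − 1. -/

import Mathlib

open Function

namespace GameCol

variable {V : Type*} [Fintype V] [DecidableEq V]

/-- A finite set of vertices is independent in `G`. -/
def IsIndepF (G : SimpleGraph V) (s : Finset V) : Prop :=
  ∀ u ∈ s, ∀ v ∈ s, ¬ G.Adj u v

/-! ### The vertex colouring game.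

A position is a partial proper colouring `f : V → Option ℕ` (`none` = uncoloured);
the palette consists of the `k` colours `0, …, k-1`.  The `Bool` records whose turn
it is (`true` = Maker).  Players alternate, Maker moving first, always making a legal
move if one exists; the game ends when the player to move has no legal move, and
Maker wins if and only if the whole graph is then coloured. -/

/-- Colour `c` may legally be played at `v`. -/
def ColLegal (G : SimpleGraph V) (k : ℕ) (f : V → Option ℕ) (v : V) (c : ℕ) : Prop :=
  c < k ∧ f v = none ∧ ∀ u, G.Adj v u → f u ≠ some c

/-- Every vertex is coloured. -/
def FullC (f : V → Option ℕ) : Prop := ∀ v, f v ≠ none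

/-- Maker wins the vertex colouring game from the given position with optimal play
(`fuel` is an upper bound on the number of remaining moves). -/
def MakerWinsC (G : SimpleGraph V) (k : ℕ) : ℕ → (V → Option ℕ) → Bool → Prop
  | 0, f, _ => FullC f
  | fuel + 1, f, true => FullC f ∨
      ∃ v c, ColLegal G k f v c ∧ MakerWinsC G k fuel (update f v (some c)) false
  | fuel + 1, f, false => FullC f ∨
      ((∃ v c, ColLegal G k f v c) ∧
        ∀ v c, ColLegal G k f v c → MakerWinsC G k fuel (update f v (some c)) true)

/-- The game chromatic number `χ_g(G)`: the least number of colours for which Maker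
has a winning strategy in the vertex colouring game. -/
noncomputable def gameChromaticNumber (G : SimpleGraph V) : ℕ :=
  sInf {k | MakerWinsC G k (Fintype.card V) (fun _ => none) true}

/-! ### The vertex colouring game with blanks.

Positions are `f : V → Option (Option ℕ)`: `none` = unplayed, `some none` = blank,
`some (some c)` = coloured with colour `c`.  The palette is a finite set `K ⊆ ℕ` of
colours.  On her turn Maker must play a colour; on his turn Breaker may play a colour,
or a blank at any unplayed vertex.  The game ends as soon as no vertex can legally
receive a colour, and Maker wins iff every vertex is then coloured or blank. -/

/-- Colour `c` may legally be played at `v` (blanks put no restriction on their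
neighbours). -/
def BColLegal (G : SimpleGraph V) (K : Finset ℕ) (f : V → Option (Option ℕ))
    (v : V) (c : ℕ) : Prop :=
  c ∈ K ∧ f v = none ∧ ∀ u, G.Adj v u → f u ≠ some (some c)

/-- Every vertex is coloured or blank. -/
def AllPlayed (f : V → Option (Option ℕ)) : Prop := ∀ v, f v ≠ none

/-- Maker wins the vertex colouring game with blanks from the given position. -/
def MakerWinsB (G : SimpleGraph V) (K : Finset ℕ) :
    ℕ → (V → Option (Option ℕ)) → Bool → Prop
  | 0, f, _ => AllPlayed f
  | fuel + 1, f, true => AllPlayed f ∨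
      ∃ v c, BColLegal G K f v c ∧ MakerWinsB G K fuel (update f v (some (some c))) false
  | fuel + 1, f, false =>
      ((¬ ∃ v c, BColLegal G K f v c) ∧ AllPlayed f) ∨
      ((∃ v c, BColLegal G K f v c) ∧
        (∀ v c, BColLegal G K f v c →
          MakerWinsB G K fuel (update f v (some (some c))) true) ∧
        (∀ v, f v = none → MakerWinsB G K fuel (update f v (some none)) true))

/-- The game chromatic number with blanks `χ_gb(G)`: the least number of colours for
which Maker has a winning strategy in the vertex colouring game with blanks. -/
noncomputable def chiGb (G : SimpleGraph V) : ℕ :=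
  sInf {k | MakerWinsB G (Finset.range k) (Fintype.card V) (fun _ => none) true}

/-! ### The game with blanks, with classes marked for blanks.

The extra datum is the finite set `ds` of currently marked classes.  Maker may also
play blanks at unplayed vertices of marked classes; the game does not end while some
vertex of a marked class is unplayed; and whenever Breaker plays a blank at `v` he may
additionally remove one marked class not containing `v`. -/

/-- `v` belongs to some class marked for blanks. -/
def InMarked (ds : Finset (Finset V)) (v : V) : Prop := ∃ d ∈ ds, v ∈ d

/-- The game has ended: no colour move is available and no vertex of a class marked
for blanks is left unplayed. -/
def MEnded (G : SimpleGraph V) (K : Finset ℕ) (f : V → Option (Option ℕ))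
    (ds : Finset (Finset V)) : Prop :=
  (¬ ∃ v c, BColLegal G K f v c) ∧ ∀ v, InMarked ds v → f v ≠ none

/-- Maker wins the vertex colouring game with blanks, with the classes `ds` marked
for blanks, from the given position. -/
def MakerWinsM (G : SimpleGraph V) (K : Finset ℕ) :
    ℕ → (V → Option (Option ℕ)) → Finset (Finset V) → Bool → Prop
  | 0, f, _, _ => AllPlayed f
  | fuel + 1, f, ds, true =>
      (MEnded G K f ds ∧ AllPlayed f) ∨
      (¬ MEnded G K f ds ∧
        ((∃ v c, BColLegal G K f v c ∧
            MakerWinsM G K fuel (update f v (some (some c))) ds false) ∨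
         (∃ v, f v = none ∧ InMarked ds v ∧
            MakerWinsM G K fuel (update f v (some none)) ds false)))
  | fuel + 1, f, ds, false =>
      (MEnded G K f ds ∧ AllPlayed f) ∨
      (¬ MEnded G K f ds ∧
        (∀ v c, BColLegal G K f v c →
          MakerWinsM G K fuel (update f v (some (some c))) ds true) ∧
        (∀ v, f v = none →
          MakerWinsM G K fuel (update f v (some none)) ds true ∧
          ∀ d ∈ ds, v ∉ d →
            MakerWinsM G K fuel (update f v (some none)) (ds.erase d) true))

/-- `χ_gb(G; D₁,…,Dₛ)`: the least number of colours for which Maker has a winning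
strategy in the vertex colouring game with blanks with the classes in `ds` marked for
blanks. -/
noncomputable def chiGbM (G : SimpleGraph V) (ds : Finset (Finset V)) : ℕ :=
  sInf {k | MakerWinsM G (Finset.range k) (Fintype.card V) (fun _ => none) ds true}

/-! ### Move sequences, for conditioning the game on an initial sequence of plays. -/

/-- A move in the game with blanks: a colour at a vertex, or a blank at a vertex
together with an optional marked class which Breaker removes. -/
inductive BMove (W : Type*) where
  | color (v : W) (c : ℕ)
  | blank (v : W) (removed : Option (Finset W))
  deriving DecidableEq

/-- The vertex at which a move is made. -/
def BMove.vertex {W : Type*} : BMove W → W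
  | .color v _ => v
  | .blank v _ => v

/-- The effect of a single move on a position. -/
def bStep (st : (V → Option (Option ℕ)) × Finset (Finset V)) :
    BMove V → (V → Option (Option ℕ)) × Finset (Finset V)
  | .color v c => (update st.1 v (some (some c)), st.2)
  | .blank v none => (update st.1 v (some none), st.2)
  | .blank v (some d) => (update st.1 v (some none), st.2.erase d)

/-- The position reached after the sequence `P` of moves. -/
def bRun (st : (V → Option (Option ℕ)) × Finset (Finset V)) (P : List (BMove V)) :
    (V → Option (Option ℕ)) × Finset (Finset V) :=
  P.foldl bStep st

/-- `P` is a legal sequence of moves from the given position in the game with blanks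
with marked classes (the `Bool` is the player to move, `true` = Maker). -/
def LegalSeqM (G : SimpleGraph V) (K : Finset ℕ) :
    (V → Option (Option ℕ)) → Finset (Finset V) → Bool → List (BMove V) → Prop
  | _, _, _, [] => True
  | f, ds, true, BMove.color v c :: rest =>
      ¬ MEnded G K f ds ∧ BColLegal G K f v c ∧
        LegalSeqM G K (update f v (some (some c))) ds false rest
  | f, ds, true, BMove.blank v r :: rest =>
      ¬ MEnded G K f ds ∧ f v = none ∧ InMarked ds v ∧ r = none ∧
        LegalSeqM G K (update f v (some none)) ds false rest
  | f, ds, false, BMove.color v c :: rest =>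
      ¬ MEnded G K f ds ∧ BColLegal G K f v c ∧
        LegalSeqM G K (update f v (some (some c))) ds true rest
  | f, ds, false, BMove.blank v none :: rest =>
      ¬ MEnded G K f ds ∧ f v = none ∧
        LegalSeqM G K (update f v (some none)) ds true rest
  | f, ds, false, BMove.blank v (some d) :: rest =>
      ¬ MEnded G K f ds ∧ f v = none ∧ d ∈ ds ∧ v ∉ d ∧
        LegalSeqM G K (update f v (some none)) (ds.erase d) true rest

/-- `χ_gb(G; ds | P)`: the least number of colours for which Maker has a winning
strategy in the vertex colouring game with blanks with the classes `ds` marked for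
blanks, conditioned on the game starting with the sequence `P` of moves. -/
noncomputable def chiGbMCond (G : SimpleGraph V) (ds : Finset (Finset V))
    (P : List (BMove V)) : ℕ :=
  sInf {n | ∃ K : Finset ℕ, K.card = n ∧
    LegalSeqM G K (fun _ => none) ds true P ∧
    MakerWinsM G K (Fintype.card V - P.length) (bRun (fun _ => none, ds) P).1
      (bRun (fun _ => none, ds) P).2 (decide (P.length % 2 = 0))}

/-! ### The marking game. -/

/-- `v` may legally be marked: it is unmarked and has at most `k - 1` marked
neighbours. -/
def MarkLegal (G : SimpleGraph V) (k : ℕ) (M : Set V) (v : V) : Prop :=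
  v ∉ M ∧ (M ∩ {u | G.Adj v u}).ncard < k

/-- Maker wins the marking game from the given position. -/
def MakerWinsMark (G : SimpleGraph V) (k : ℕ) : ℕ → Set V → Bool → Prop
  | 0, M, _ => ∀ v, v ∈ M
  | fuel + 1, M, true => (∀ v, v ∈ M) ∨
      ∃ v, MarkLegal G k M v ∧ MakerWinsMark G k fuel (insert v M) false
  | fuel + 1, M, false => (∀ v, v ∈ M) ∨
      ((∃ v, MarkLegal G k M v) ∧
        ∀ v, MarkLegal G k M v → MakerWinsMark G k fuel (insert v M) true)

/-- The marking number (game colouring number) `m(G)`: the least `k` for which Maker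
has a winning strategy in the marking game. -/
noncomputable def markingNumber (G : SimpleGraph V) : ℕ :=
  sInf {k | MakerWinsMark G k (Fintype.card V) ∅ true}


end GameCol

/-!
Pair the vertices by a fixed-point-free involution `σ` whose pairs `{v, σ v}` are independent
(for `T(2r,r)`: the colour classes). Maker answers a Breaker move at `v` by playing at `σ v` when
that vertex is free, and otherwise opens a new pair; she plays a blank exactly in the pairs still
marked for blanks. So at Breaker's turn exactly one pair is half played.

The counting invariant is `s ≤ #settled blanks + #open marked pairs`, where a blank is settled
once its partner is played and a marked pair is open while one of its vertices is unplayed. It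
survives every round, since a marked pair is only ever completed together with a new settled
blank, and Breaker can only unmark a pair when he plays a blank, which becomes settled as soon
as its pair is completed. When Maker has to colour a vertex `w` of an unmarked pair, the vertices
outside `{w, σ w}` contain all coloured neighbours of `w`, at least `s - #open` settled blanks
and at least one unplayed vertex of each open marked pair, so fewer than `|V| - s - 1` colours
are blocked at `w`.
-/

namespace GameCol

open Finset

variable {V : Type*} {G : SimpleGraph V} {K : Finset ℕ} {f : V → Option (Option ℕ)}
  {ds ds' : Finset (Finset V)} {v w : V} {z : Option ℕ}

lemma mEnded_of_allPlayed (h : AllPlayed f) : MEnded G K f ds :=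
  ⟨fun ⟨v, _, hc⟩ => h v hc.2.1, fun v _ => h v⟩

lemma exists_bColLegal_of_card_lt {k : ℕ} (hw : f w = none) (S : Finset V)
    (hS : ∀ u c, G.Adj w u → f u = some (some c) → u ∈ S) (hk : S.card < k) :
    ∃ c, BColLegal G (range k) f w c := by
  by_contra! hnone
  have blocked : ∀ c ∈ range k, ∃ u, G.Adj w u ∧ f u = some (some c) := by
    intro c hc
    by_contra! h
    exact hnone c ⟨hc, hw, h⟩
  have : Nonempty V := ⟨w⟩
  choose! u hadj hu using blocked
  have : (range k).card ≤ S.card :=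
    card_le_card_of_injOn u (fun c hc => hS _ c (hadj c hc) (hu c hc)) fun c hc c' hc' h => by
      have e := hu c hc
      rw [h, hu c' hc'] at e
      simpa using e.symm
  rw [card_range] at this
  omega

section Moves

variable [DecidableEq V]

def MakerCanMoveTo (G : SimpleGraph V) (K : Finset ℕ) (f : V → Option (Option ℕ))
    (ds : Finset (Finset V)) (Q : (V → Option (Option ℕ)) → Prop) : Prop :=
  (∃ v c, BColLegal G K f v c ∧ Q (update f v (some (some c)))) ∨
    ∃ v, f v = none ∧ InMarked ds v ∧ Q (update f v (some none))

/-- Breaker's moves, with colour legality dropped: a strategy surviving these survives all of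
Breaker's legal moves. -/
def BreakerMove (f : V → Option (Option ℕ)) (ds : Finset (Finset V)) (v : V) (z : Option ℕ)
    (ds' : Finset (Finset V)) : Prop :=
  f v = none ∧ (ds' = ds ∨ z = none ∧ ∃ d ∈ ds, v ∉ d ∧ ds' = ds.erase d)

lemma MakerCanMoveTo.imp {Q R : (V → Option (Option ℕ)) → Prop}
    (h : MakerCanMoveTo G K f ds Q)
    (hQR : ∀ v z, f v = none → Q (update f v (some z)) → R (update f v (some z))) :
    MakerCanMoveTo G K f ds R := by
  rcases h with ⟨v, c, hc, hQ⟩ | ⟨v, hv, hm, hQ⟩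
  · exact Or.inl ⟨v, c, hc, hQR v _ hc.2.1 hQ⟩
  · exact Or.inr ⟨v, hv, hm, hQR v _ hv hQ⟩

lemma MakerCanMoveTo.not_mEnded {Q : (V → Option (Option ℕ)) → Prop}
    (h : MakerCanMoveTo G K f ds Q) : ¬ MEnded G K f ds := by
  rintro ⟨hcol, hmarked⟩
  rcases h with ⟨v, c, hc, -⟩ | ⟨v, hv, hm, -⟩
  · exact hcol ⟨v, c, hc⟩
  · exact hmarked v hm hv

lemma BreakerMove.subset (h : BreakerMove f ds v z ds') : ds' ⊆ ds := by
  obtain ⟨-, rfl | ⟨-, d, -, -, rfl⟩⟩ := h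
  exacts [subset_rfl, erase_subset _ _]

lemma BreakerMove.mem_iff (h : BreakerMove f ds v z ds') {D : Finset V} (hvD : v ∈ D) :
    D ∈ ds' ↔ D ∈ ds := by
  obtain ⟨-, rfl | ⟨-, d, -, hvd, rfl⟩⟩ := h
  · rfl
  · exact mem_erase.trans (and_iff_right (by rintro rfl; exact hvd hvD))

end Moves

section Fuel

variable [Fintype V]

def unplayed (f : V → Option (Option ℕ)) : Finset V := univ.filter fun v => f v = none

def coloured (f : V → Option (Option ℕ)) : Finset V :=
  univ.filter fun u => f u ≠ none ∧ f u ≠ some none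

lemma mem_coloured {u : V} : u ∈ coloured f ↔ ∃ c, f u = some (some c) := by
  rcases h : f u with _ | _ | c <;> simp [coloured, h]

variable [DecidableEq V]

lemma card_unplayed_update (hv : f v = none) (z : Option ℕ) :
    (unplayed (update f v (some z))).card + 1 = (unplayed f).card := by
  have : unplayed (update f v (some z)) = (unplayed f).erase v := by
    ext u
    by_cases h : u = v <;> simp [unplayed, h]
  rw [this, card_erase_add_one (by simpa [unplayed] using hv)]

theorem makerWinsM_of_strategy (PM PB : (V → Option (Option ℕ)) → Finset (Finset V) → Prop)
    (hM : ∀ f ds, PM f ds → AllPlayed f ∨ MakerCanMoveTo G K f ds (PB · ds))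
    (hB : ∀ f ds, PB f ds → ¬ MEnded G K f ds ∧
      ∀ v z ds', BreakerMove f ds v z ds' → PM (update f v (some z)) ds') (n : ℕ) :
    ∀ f ds, (unplayed f).card ≤ n →
      (PM f ds → MakerWinsM G K n f ds true) ∧ (PB f ds → MakerWinsM G K n f ds false) := by
  induction n with
  | zero =>
    intro f ds hn
    have hall : AllPlayed f := fun v hv =>
      (card_pos.2 ⟨v, by simpa [unplayed] using hv⟩).ne' (Nat.le_zero.1 hn)
    exact ⟨fun _ => by rw [MakerWinsM]; exact hall, fun _ => by rw [MakerWinsM]; exact hall⟩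
  | succ n ih =>
    intro f ds hn
    have fuel {v} (hv : f v = none) (z : Option ℕ) :
        (unplayed (update f v (some z))).card ≤ n := by
      have := card_unplayed_update hv z
      omega
    constructor
    · intro hPM
      rw [MakerWinsM]
      rcases hM f ds hPM with hall | hmove
      · exact Or.inl ⟨mEnded_of_allPlayed hall, hall⟩
      · exact Or.inr ⟨hmove.not_mEnded,
          hmove.imp (R := (MakerWinsM G K n · ds false)) fun v z hv hPB =>
            (ih _ ds (fuel hv z)).2 hPB⟩
    · intro hPB
      obtain ⟨hnotEnded, hmoves⟩ := hB f ds hPB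
      have reply v z ds' (hm : BreakerMove f ds v z ds') :
          MakerWinsM G K n (update f v (some z)) ds' true :=
        (ih _ ds' (fuel hm.1 z)).1 (hmoves v z ds' hm)
      rw [MakerWinsM]
      exact Or.inr ⟨hnotEnded, fun v c hc => reply v _ ds ⟨hc.2.1, Or.inl rfl⟩,
        fun v hv => ⟨reply v none ds ⟨hv, Or.inl rfl⟩,
          fun d hd hvd => reply v none _ ⟨hv, Or.inr ⟨rfl, d, hd, hvd, rfl⟩⟩⟩⟩

end Fuel

section Pairing

variable [DecidableEq V] {σ : V → V}

def pairOf (σ : V → V) (x : V) : Finset V := {x, σ x}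

lemma mem_pairOf {x y : V} : x ∈ pairOf σ y ↔ x = y ∨ x = σ y := by simp [pairOf]

lemma self_mem_pairOf (x : V) : x ∈ pairOf σ x := by simp [pairOf]

lemma apply_mem_pairOf (x : V) : σ x ∈ pairOf σ x := by simp [pairOf]

lemma pairOf_apply (hσ : Involutive σ) (x : V) : pairOf σ (σ x) = pairOf σ x := by
  simp [pairOf, hσ x, Finset.pair_comm]

lemma pairOf_eq_of_mem (hσ : Involutive σ) {x y : V} (h : x ∈ pairOf σ y) :
    pairOf σ x = pairOf σ y := by
  rcases mem_pairOf.1 h with rfl | rfl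
  · rfl
  · exact pairOf_apply hσ y

lemma card_pairOf (hfix : ∀ v, σ v ≠ v) (x : V) : (pairOf σ x).card = 2 :=
  card_pair (hfix x).symm

lemma eq_pairOf_of_mem (hσ : Involutive σ) (hds : ∀ D ∈ ds, ∃ x, D = pairOf σ x)
    {D : Finset V} (hD : D ∈ ds) (hv : v ∈ D) : D = pairOf σ v := by
  obtain ⟨x, rfl⟩ := hds D hD
  exact (pairOf_eq_of_mem hσ hv).symm

def openMarked (f : V → Option (Option ℕ)) (ds : Finset (Finset V)) : Finset (Finset V) :=
  ds.filter fun D => ∃ v ∈ D, f v = none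

lemma openMarked_subset_insert_update (hσ : Involutive σ)
    (hds : ∀ D ∈ ds, ∃ x, D = pairOf σ x) (z : Option (Option ℕ)) :
    openMarked f ds ⊆ insert (pairOf σ v) (openMarked (update f v z) ds) := by
  intro D hD
  obtain ⟨hDds, x, hxD, hx⟩ := mem_filter.1 hD
  by_cases hxv : x = v
  · subst hxv
    exact mem_insert.2 (Or.inl (eq_pairOf_of_mem hσ hds hDds hxD))
  · exact mem_insert_of_mem (mem_filter.2 ⟨hDds, x, hxD, by rwa [update_of_ne hxv]⟩)

lemma card_openMarked_le_update (hσ : Involutive σ)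
    (hds : ∀ D ∈ ds, ∃ x, D = pairOf σ x) (z : Option (Option ℕ)) :
    (openMarked f ds).card ≤
      (openMarked (update f v z) ds).card + if pairOf σ v ∈ ds then 1 else 0 := by
  have hsub := openMarked_subset_insert_update (f := f) (v := v) hσ hds z
  split_ifs with hP
  · exact (card_le_card hsub).trans (card_insert_le _ _)
  · refine card_le_card fun D hD => ?_
    rcases mem_insert.1 (hsub hD) with rfl | h
    · exact absurd (mem_filter.1 hD).1 hP
    · exact h

lemma openMarked_subset_update_of_opening (hσ : Involutive σ) (hfix : ∀ v, σ v ≠ v)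
    (hds : ∀ D ∈ ds, ∃ x, D = pairOf σ x) (hσv : f (σ v) = none)
    (z : Option (Option ℕ)) :
    openMarked f ds ⊆ openMarked (update f v z) ds := by
  intro D hD
  rcases mem_insert.1 (openMarked_subset_insert_update (v := v) hσ hds z hD) with hDv | h
  · exact mem_filter.2 ⟨(mem_filter.1 hD).1, σ v, hDv ▸ apply_mem_pairOf v,
      by rwa [update_of_ne (hfix v)]⟩
  · exact h

variable [Fintype V]

def settledBlanks (σ : V → V) (f : V → Option (Option ℕ)) : Finset V :=
  univ.filter fun v => f v = some none ∧ f (σ v) ≠ none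

def blankCredit (σ : V → V) (f : V → Option (Option ℕ)) (ds : Finset (Finset V)) : ℕ :=
  (settledBlanks σ f).card + (openMarked f ds).card

lemma settledBlanks_subset_update (hv : f v = none) (z : Option ℕ) :
    settledBlanks σ f ⊆ settledBlanks σ (update f v (some z)) := by
  intro x hx
  simp only [settledBlanks, mem_filter, mem_univ, true_and] at hx ⊢
  have hxv : x ≠ v := by rintro rfl; simp [hv] at hx
  have hσxv : σ x ≠ v := by rintro h; exact hx.2 (h ▸ hv)
  rwa [update_of_ne hxv, update_of_ne hσxv]

lemma card_settledBlanks_update_of_closing (hσ : Involutive σ) (hv : f v = none)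
    (hσv : f (σ v) ≠ none) (z : Option ℕ) :
    (settledBlanks σ f).card + (if z = none then 1 else 0) +
        (if f (σ v) = some none then 1 else 0) ≤
      (settledBlanks σ (update f v (some z))).card := by
  set g := update f v (some z)
  have hne : σ v ≠ v := by
    intro h
    rw [h] at hσv
    exact hσv hv
  set N := (pairOf σ v).filter fun x => g x = some none
  have hN : N.card = (if z = none then 1 else 0) + (if f (σ v) = some none then 1 else 0) := by
    have hgσv : g (σ v) = f (σ v) := update_of_ne hne _ _
    simp only [N, pairOf, filter_insert, filter_singleton, hgσv, g, update_self,
      Option.some.injEq]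
    split_ifs <;> simp [hne.symm]
  have hdisj : Disjoint (settledBlanks σ f) N := by
    refine disjoint_left.2 fun x hx hxN => ?_
    simp only [settledBlanks, mem_filter, mem_univ, true_and] at hx
    rcases mem_pairOf.1 (mem_filter.1 hxN).1 with rfl | rfl
    · simp [hv] at hx
    · simp [hσ v, hv] at hx
  have hsub : settledBlanks σ f ∪ N ⊆ settledBlanks σ g := by
    refine union_subset (settledBlanks_subset_update hv z) fun x hx => ?_
    obtain ⟨hxP, hxb⟩ := mem_filter.1 hx
    refine mem_filter.2 ⟨mem_univ _, hxb, ?_⟩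
    rcases mem_pairOf.1 hxP with rfl | rfl
    · simpa [g, update_of_ne hne] using hσv
    · simp [g, hσ v]
  calc _ = (settledBlanks σ f ∪ N).card := by rw [card_union_of_disjoint hdisj, hN, add_assoc]
    _ ≤ _ := card_le_card hsub

lemma blankCredit_le_update_of_opening (hσ : Involutive σ) (hfix : ∀ v, σ v ≠ v)
    (hds : ∀ D ∈ ds, ∃ x, D = pairOf σ x) (hv : f v = none) (hσv : f (σ v) = none)
    (z : Option ℕ) : blankCredit σ f ds ≤ blankCredit σ (update f v (some z)) ds :=
  add_le_add (card_le_card (settledBlanks_subset_update hv z))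
    (card_le_card (openMarked_subset_update_of_opening hσ hfix hds hσv _))

lemma blankCredit_add_le_of_closing (hσ : Involutive σ)
    (hds : ∀ D ∈ ds, ∃ x, D = pairOf σ x) (hv : f v = none) (hσv : f (σ v) ≠ none)
    (z : Option ℕ) :
    blankCredit σ f ds + (if z = none then 1 else 0) + (if f (σ v) = some none then 1 else 0) ≤
      blankCredit σ (update f v (some z)) ds + if pairOf σ v ∈ ds then 1 else 0 := by
  have := card_settledBlanks_update_of_closing hσ hv hσv z
  have := card_openMarked_le_update (f := f) (v := v) hσ hds (some z)
  unfold blankCredit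
  omega

lemma BreakerMove.blankCredit_le (h : BreakerMove f ds v z ds') (g : V → Option (Option ℕ)) :
    blankCredit σ g ds ≤ blankCredit σ g ds' + if z = none then 1 else 0 := by
  obtain ⟨-, rfl | ⟨rfl, d, -, -, rfl⟩⟩ := h
  · exact Nat.le_add_right _ _
  · have := pred_card_le_card_erase (s := openMarked g ds) (a := d)
    simp only [blankCredit, openMarked, filter_erase, if_pos] at this ⊢
    omega

lemma coloured_update_sdiff {P : Finset V} (hv : v ∈ P) (z : Option (Option ℕ)) :
    coloured (update f v z) \ P = coloured f \ P := by
  ext x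
  by_cases hx : x ∈ P
  · simp [hx]
  · have hxv : x ≠ v := by rintro rfl; exact hx hv
    simp [hx, coloured, update_of_ne hxv]

lemma card_coloured_sdiff_pairOf_lt (hσ : Involutive σ) (hfix : ∀ v, σ v ≠ v)
    (hds : ∀ D ∈ ds, ∃ x, D = pairOf σ x) {s : ℕ} (hcredit : s ≤ blankCredit σ f ds)
    (hw : f w = none) (hP : pairOf σ w ∉ ds) :
    (coloured f \ pairOf σ w).card < Fintype.card V - s - 1 := by
  set P := pairOf σ w
  have hopen : (openMarked f ds).card ≤ (unplayed f \ P).card := by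
    refine (card_le_card fun D hD => ?_).trans (card_image_le (f := pairOf σ))
    obtain ⟨hDds, x, hxD, hx⟩ := mem_filter.1 hD
    have hDx := eq_pairOf_of_mem hσ hds hDds hxD
    have hxU : x ∈ unplayed f := by simpa [unplayed] using hx
    refine mem_image.2 ⟨x, mem_sdiff.2 ⟨hxU, fun hxP => ?_⟩, hDx.symm⟩
    exact hP (by rwa [show P = D from hDx ▸ (pairOf_eq_of_mem hσ hxP).symm])
  have hsettled : settledBlanks σ f ⊆ Pᶜ := by
    intro x hx
    simp only [settledBlanks, mem_filter, mem_univ, true_and] at hx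
    rw [mem_compl, mem_pairOf]
    rintro (rfl | rfl)
    · simp [hw] at hx
    · simp [hσ _, hw] at hx
  have hdisj₁ : Disjoint (coloured f \ P) (settledBlanks σ f) := by
    refine disjoint_left.2 fun x hx hx' => ?_
    obtain ⟨c, hc⟩ := mem_coloured.1 (mem_sdiff.1 hx).1
    simp [settledBlanks, hc] at hx'
  have hdisj₂ : Disjoint (coloured f \ P ∪ settledBlanks σ f) (unplayed f \ P) := by
    refine disjoint_left.2 fun x hx hx' => ?_
    have hx'' : f x = none := by simpa [unplayed] using (mem_sdiff.1 hx').1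
    rcases mem_union.1 hx with hx | hx
    · simp [coloured, hx''] at hx
    · simp [settledBlanks, hx''] at hx
  have hunion : coloured f \ P ∪ settledBlanks σ f ∪ unplayed f \ P ⊆ Pᶜ :=
    union_subset (union_subset (fun x hx => mem_compl.2 (mem_sdiff.1 hx).2) hsettled)
      fun x hx => mem_compl.2 (mem_sdiff.1 hx).2
  have hcard := card_le_card hunion
  rw [card_union_of_disjoint hdisj₂, card_union_of_disjoint hdisj₁, card_compl,
    card_pairOf hfix] at hcard
  have hP2 := card_le_univ P
  rw [card_pairOf hfix] at hP2
  unfold blankCredit at hcredit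
  omega

lemma makerCanMoveTo_of_card_lt (hG : ∀ v, ¬ G.Adj v (σ v)) {k : ℕ}
    {Q : (V → Option (Option ℕ)) → Prop} (hw : f w = none)
    (hk : pairOf σ w ∉ ds → (coloured f \ pairOf σ w).card < k)
    (hQ : ∀ z, (z = none ↔ pairOf σ w ∈ ds) → Q (update f w (some z))) :
    MakerCanMoveTo G (range k) f ds Q := by
  by_cases hP : pairOf σ w ∈ ds
  · exact Or.inr ⟨w, hw, ⟨_, hP, self_mem_pairOf w⟩, hQ none (iff_of_true rfl hP)⟩
  · have hnbrs :
        ∀ u c, G.Adj w u → f u = some (some c) → u ∈ coloured f \ pairOf σ w := by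
      refine fun u c hadj hu => mem_sdiff.2 ⟨mem_coloured.2 ⟨c, hu⟩, fun huP => ?_⟩
      rcases mem_pairOf.1 huP with rfl | rfl
      exacts [hadj.ne rfl, hG w hadj]
    obtain ⟨c, hc⟩ := exists_bColLegal_of_card_lt hw _ hnbrs (hk hP)
    exact Or.inl ⟨w, c, hc, hQ _ (iff_of_false (by simp) hP)⟩

end Pairing

section PairingStrategy

variable [DecidableEq V] [Fintype V] {σ : V → V} {s : ℕ} {a : V}

structure MakerTurnInv (σ : V → V) (s : ℕ) (f : V → Option (Option ℕ))
    (ds : Finset (Finset V)) : Prop where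
  pairs : ∀ D ∈ ds, ∃ x, D = pairOf σ x
  balanced : ∀ v, f v = none → f (σ v) = none
  credit : s ≤ blankCredit σ f ds

structure BreakerTurnInv (σ : V → V) (s : ℕ) (f : V → Option (Option ℕ))
    (ds : Finset (Finset V)) (a : V) : Prop where
  pairs : ∀ D ∈ ds, ∃ x, D = pairOf σ x
  played : f a ≠ none
  partner_unplayed : f (σ a) = none
  balanced : ∀ v, v ≠ σ a → f v = none → f (σ v) = none
  blank_of_marked : pairOf σ a ∈ ds → f a = some none
  credit : s ≤ blankCredit σ f ds

lemma makerTurnInv_start (hds : ∀ D ∈ ds, ∃ x, D = pairOf σ x) :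
    MakerTurnInv σ ds.card (fun _ => none) ds where
  pairs := hds
  balanced _ _ := rfl
  credit := by
    have : openMarked (fun _ => none) ds = ds := filter_true_of_mem fun D hD => by
      obtain ⟨x, rfl⟩ := hds D hD
      exact ⟨x, self_mem_pairOf x, rfl⟩
    simp [blankCredit, this]

lemma MakerTurnInv.breakerTurnInv_update (hσ : Involutive σ) (hfix : ∀ v, σ v ≠ v)
    (inv : MakerTurnInv σ s f ds) (hw : f w = none) (hz : pairOf σ w ∈ ds → z = none) :
    BreakerTurnInv σ s (update f w (some z)) ds w where
  pairs := inv.pairs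
  played := by simp
  partner_unplayed := by rw [update_of_ne (hfix w)]; exact inv.balanced w hw
  balanced v hv hv' := by
    have hvw : v ≠ w := by rintro rfl; simp at hv'
    have hσvw : σ v ≠ w := by rintro rfl; exact hv (hσ v).symm
    rw [update_of_ne hvw] at hv'
    rw [update_of_ne hσvw]
    exact inv.balanced v hv'
  blank_of_marked h := by simp [hz h]
  credit := inv.credit.trans
    (blankCredit_le_update_of_opening hσ hfix inv.pairs hw (inv.balanced w hw) z)



lemma BreakerTurnInv.makerTurnInv_update (hσ : Involutive σ)
    (inv : BreakerTurnInv σ s f ds a) (hm : BreakerMove f ds (σ a) z ds') :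
    MakerTurnInv σ s (update f (σ a) (some z)) ds' where
  pairs D hD := inv.pairs D (hm.subset hD)
  balanced v hv := by
    have hva : v ≠ σ a := by rintro rfl; simp at hv
    rw [update_of_ne hva] at hv
    have hσva : σ v ≠ σ a := fun h => inv.played (hσ.injective h ▸ hv)
    rw [update_of_ne hσva]
    exact inv.balanced v hva hv
  credit := by
    have hclose := blankCredit_add_le_of_closing hσ inv.pairs inv.partner_unplayed
      (by rw [hσ a]; exact inv.played) z
    rw [hσ a, pairOf_apply hσ] at hclose
    have hunmark := hm.blankCredit_le (σ := σ) (update f (σ a) (some z))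
    have hblank :
        (if pairOf σ a ∈ ds then 1 else 0) ≤ if f a = some none then 1 else 0 := by
      split_ifs with hP hb <;> simp_all [inv.blank_of_marked]
    have := inv.credit
    omega

lemma BreakerTurnInv.breakerTurnInv_reply (hσ : Involutive σ) (hfix : ∀ v, σ v ≠ v)
    {z' : Option ℕ} (inv : BreakerTurnInv σ s f ds a) (hm : BreakerMove f ds v z ds')
    (hv : v ≠ σ a) (hz' : z' = none ↔ pairOf σ v ∈ ds) :
    BreakerTurnInv σ s (update (update f v (some z)) (σ v) (some z')) ds' a := by
  have hfar : ∀ x, x ≠ v → x ≠ σ v →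
      update (update f v (some z)) (σ v) (some z') x = f x := fun x h₁ h₂ => by
    rw [update_of_ne h₂, update_of_ne h₁]
  have hσv : f (σ v) = none := inv.balanced v hv hm.1
  have hav : a ≠ v := fun e => inv.played (e ▸ hm.1)
  have haσv : a ≠ σ v := by rintro rfl; exact hv (hσ v).symm
  refine ⟨fun D hD => inv.pairs D (hm.subset hD), ?_, ?_, fun x hx hhx => ?_, fun hP => ?_, ?_⟩
  · rw [hfar a hav haσv]; exact inv.played
  · rw [hfar (σ a) (Ne.symm hv) (fun e => hav (hσ.injective e))]; exact inv.partner_unplayed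
  · have hxσv : x ≠ σ v := by rintro rfl; simp at hhx
    have hxv : x ≠ v := by rintro rfl; simp [update_of_ne (hfix x).symm] at hhx
    rw [hfar x hxv hxσv] at hhx
    rw [hfar (σ x) (by rintro rfl; exact hxσv (hσ x).symm) (fun e => hxv (hσ.injective e))]
    exact inv.balanced x hx hhx
  · rw [hfar a hav haσv]; exact inv.blank_of_marked (hm.subset hP)
  · have hopen := blankCredit_le_update_of_opening hσ hfix inv.pairs hm.1 hσv z
    have hclose := blankCredit_add_le_of_closing (f := update f v (some z)) (v := σ v) hσ
      inv.pairs (by simp [update_of_ne (hfix v), hσv]) (by simp [hσ v]) z'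
    simp only [hσ v, pairOf_apply hσ, update_self, Option.some.injEq] at hclose
    have hunmark := hm.blankCredit_le (σ := σ) (update (update f v (some z)) (σ v) (some z'))
    have hmark : (if z' = none then 1 else 0) = if pairOf σ v ∈ ds then 1 else 0 := by
      simp only [hz']
    have := inv.credit
    omega

lemma MakerTurnInv.allPlayed_or_makerCanMoveTo (hσ : Involutive σ) (hfix : ∀ v, σ v ≠ v)
    (hG : ∀ v, ¬ G.Adj v (σ v)) (inv : MakerTurnInv σ s f ds) :
    AllPlayed f ∨ MakerCanMoveTo G (range (Fintype.card V - s - 1)) f ds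
      (fun g => ∃ a, BreakerTurnInv σ s g ds a) := by
  refine or_iff_not_imp_left.2 fun hall => ?_
  obtain ⟨w, hw⟩ : ∃ w, f w = none := by simpa [AllPlayed] using hall
  exact makerCanMoveTo_of_card_lt hG hw
    (card_coloured_sdiff_pairOf_lt hσ hfix inv.pairs inv.credit hw)
    fun z hz => ⟨w, inv.breakerTurnInv_update hσ hfix hw hz.2⟩

lemma BreakerTurnInv.not_mEnded (hσ : Involutive σ) (hfix : ∀ v, σ v ≠ v)
    (hG : ∀ v, ¬ G.Adj v (σ v)) (inv : BreakerTurnInv σ s f ds a) :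
    ¬ MEnded G (range (Fintype.card V - s - 1)) f ds :=
  (makerCanMoveTo_of_card_lt (Q := fun _ => True) hG inv.partner_unplayed
    (card_coloured_sdiff_pairOf_lt hσ hfix inv.pairs inv.credit inv.partner_unplayed)
    fun _ _ => trivial).not_mEnded

lemma BreakerTurnInv.makerCanMoveTo_reply (hσ : Involutive σ) (hfix : ∀ v, σ v ≠ v)
    (hG : ∀ v, ¬ G.Adj v (σ v)) (inv : BreakerTurnInv σ s f ds a)
    (hm : BreakerMove f ds v z ds') (hv : v ≠ σ a) :
    MakerCanMoveTo G (range (Fintype.card V - s - 1)) (update f v (some z)) ds'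
      (fun g => BreakerTurnInv σ s g ds' a) := by
  have hmarked : pairOf σ (σ v) ∈ ds' ↔ pairOf σ v ∈ ds := by
    rw [pairOf_apply hσ]
    exact hm.mem_iff (self_mem_pairOf v)
  refine makerCanMoveTo_of_card_lt hG
    (by rw [update_of_ne (hfix v)]; exact inv.balanced v hv hm.1) (fun hP => ?_)
    fun z' hz' => inv.breakerTurnInv_reply hσ hfix hm hv (hz'.trans hmarked)
  rw [pairOf_apply hσ, coloured_update_sdiff (self_mem_pairOf v)]
  exact card_coloured_sdiff_pairOf_lt hσ hfix inv.pairs inv.credit hm.1 (hmarked.not.1 hP)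

theorem chiGbM_le_of_pairing (hσ : Involutive σ) (hfix : ∀ v, σ v ≠ v)
    (hG : ∀ v, ¬ G.Adj v (σ v)) (hds : ∀ D ∈ ds, ∃ x, D = pairOf σ x) :
    chiGbM G ds ≤ Fintype.card V - ds.card - 1 := by
  set s := ds.card
  let PB f ds' := ∃ a, BreakerTurnInv σ s f ds' a
  let PM f ds' := MakerTurnInv σ s f ds' ∨
    MakerCanMoveTo G (range (Fintype.card V - s - 1)) f ds' (PB · ds')
  have hM : ∀ f ds', PM f ds' → AllPlayed f ∨
      MakerCanMoveTo G (range (Fintype.card V - s - 1)) f ds' (PB · ds') := by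
    rintro f ds' (inv | hmove)
    exacts [inv.allPlayed_or_makerCanMoveTo hσ hfix hG, Or.inr hmove]
  have hB : ∀ f ds', PB f ds' → ¬ MEnded G (range (Fintype.card V - s - 1)) f ds' ∧
      ∀ v z ds'', BreakerMove f ds' v z ds'' → PM (update f v (some z)) ds'' := by
    rintro f ds' ⟨a, inv⟩
    refine ⟨inv.not_mEnded hσ hfix hG, fun v z ds'' hm => ?_⟩
    by_cases hv : v = σ a
    · exact Or.inl (hv ▸ inv.makerTurnInv_update hσ (hv ▸ hm))
    · exact Or.inr ((inv.makerCanMoveTo_reply hσ hfix hG hm hv).imp fun _ _ _ h => ⟨a, h⟩)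
  exact Nat.sInf_le ((makerWinsM_of_strategy PM PB hM hB _ _ ds (card_le_univ _)).1
    (Or.inl (makerTurnInv_start hds)))

end PairingStrategy

section Turan

def turanPartner (r : ℕ) (v : Fin (2 * r)) : Fin (2 * r) :=
  if h : (v : ℕ) < r then ⟨v + r, by omega⟩ else ⟨v - r, by omega⟩

lemma val_turanPartner (r : ℕ) (v : Fin (2 * r)) :
    (turanPartner r v : ℕ) = if (v : ℕ) < r then (v : ℕ) + r else (v : ℕ) - r := by
  unfold turanPartner
  split_ifs <;> rfl

lemma turanPartner_involutive (r : ℕ) : Involutive (turanPartner r) := fun v => by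
  ext
  simp only [val_turanPartner]
  split_ifs <;> omega

lemma turanPartner_ne (r : ℕ) (v : Fin (2 * r)) : turanPartner r v ≠ v := fun h => by
  have := congrArg Fin.val h
  rw [val_turanPartner] at this
  split_ifs at this <;> omega

lemma mod_eq_ite_of_lt_two_mul {n r : ℕ} (h : n < 2 * r) :
    n % r = if n < r then n else n - r := by
  split_ifs with hn
  · exact Nat.mod_eq_of_lt hn
  · rw [Nat.mod_eq_sub_mod (not_lt.1 hn), Nat.mod_eq_of_lt (by omega)]

lemma filter_mod_eq_eq_pairOf {r j : ℕ} (hj : j < r) :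
    univ.filter (fun v : Fin (2 * r) => (v : ℕ) % r = j) =
      pairOf (turanPartner r) ⟨j, by omega⟩ := by
  ext v
  have := v.isLt
  simp only [mem_filter, mem_univ, true_and, mem_pairOf, Fin.ext_iff, val_turanPartner,
    mod_eq_ite_of_lt_two_mul this]
  split_ifs <;> omega

lemma val_turanPartner_mod (r : ℕ) (v : Fin (2 * r)) :
    (turanPartner r v : ℕ) % r = (v : ℕ) % r := by
  rw [val_turanPartner]
  split_ifs with h
  · exact Nat.add_mod_right _ _
  · exact (Nat.mod_eq_sub_mod (not_lt.1 h)).symm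

lemma not_turanGraph_adj_turanPartner (r : ℕ) (v : Fin (2 * r)) :
    ¬ (SimpleGraph.turanGraph (2 * r) r).Adj v (turanPartner r v) :=
  fun h => SimpleGraph.turanGraph_adj.1 h (val_turanPartner_mod r v).symm

lemma card_image_filter_mod_eq {r s : ℕ} {ι : Fin s → Fin r} (hι : Injective ι) :
    (univ.image fun j => univ.filter fun v : Fin (2 * r) => (v : ℕ) % r = ι j).card = s := by
  rw [card_image_of_injective _ fun j j' h => ?_, card_univ, Fintype.card_fin]
  have hmem := congrArg ((⟨ι j, by omega⟩ : Fin (2 * r)) ∈ ·) h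
  simp only [mem_filter, mem_univ, true_and, Nat.mod_eq_of_lt (ι j).isLt, eq_iff_iff,
    true_iff] at hmem
  exact hι (Fin.ext hmem)

end Turan

theorem chiGbM_le_of_subgraph_turan_general (r : ℕ)
    (G : SimpleGraph (Fin (2 * r)))
    (hle : G ≤ SimpleGraph.turanGraph (2 * r) r)
    {s : ℕ} (ι : Fin s → Fin r) (hι : Function.Injective ι) :
    chiGbM G (Finset.image
        (fun j => Finset.univ.filter (fun v : Fin (2 * r) => (v : ℕ) % r = (ι j : ℕ)))
        Finset.univ) ≤
      2 * r - s - 1 := by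
  refine (chiGbM_le_of_pairing (turanPartner_involutive r) (turanPartner_ne r)
    (fun v h => not_turanGraph_adj_turanPartner r v (hle h)) fun D hD => ?_).trans_eq
    (by rw [card_image_filter_mod_eq hι, Fintype.card_fin])
  obtain ⟨j, -, rfl⟩ := mem_image.1 hD
  exact ⟨_, filter_mod_eq_eq_pairOf (ι j).isLt⟩

/-- If `G` is a spanning subgraph of the Turán graph `T(2r,r)` and
`D₁,…,Dₛ` are some `s` of the `r` size-2 colour classes of `T(2r,r)`, then
`χ_gb(G; D₁,…,Dₛ) ≤ 2r − s − 1`. -/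
theorem chiGbM_le_of_subgraph_turan (r : ℕ) (hr : 1 ≤ r)
    (G : SimpleGraph (Fin (2 * r)))
    (hle : G ≤ SimpleGraph.turanGraph (2 * r) r)
    {s : ℕ} (ι : Fin s → Fin r) (hι : Function.Injective ι) :
    chiGbM G (Finset.image
        (fun j => Finset.univ.filter (fun v : Fin (2 * r) => (v : ℕ) % r = (ι j : ℕ)))
        Finset.univ) ≤
      2 * r - s - 1 :=
  chiGbM_le_of_subgraph_turan_general r G hle ι hι

end GameCol
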